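/- arXiv:1206.6632 — 4 statements merged into one kernel-verified Lean document; each statement's English description precedes it below -/
import Mathlib

section
/- Let f : A → B be a homomorphism of (associative, unital) rings and let I be an injective left A-module. Then J := Hom_A(B, I), equipped with the left B-module structure (b·φ)(b') = φ(b'b), is an injective left B-module. -/
theorem stmt_0 {A B : Type} [Ring A] [Ring B] (f : A →+* B)
    (I : ModuleCat A) (hI : CategoryTheory.Injective I) :
    CategoryTheory.Injective ((ModuleCat.coextendScalars f).obj I) :=
  (ModuleCat.restrictCoextendScalarsAdj f).map_injective I hI
end

section
/- Let M be an abelian category, I a K-injective complex, and φ : I → M' a quasi-isomorphism in the homotopy category K(M). Then φ is a split monomorphism in K(M): there exists a morphism ψ : M' → I in K(M) such that ψ ∘ φ = 1_I. -/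
open CategoryTheory Limits

/-- A cochain complex `I` in an abelian category is K-injective if the Hom complex
`Hom•(N, I)` is acyclic for every acyclic complex `N`. -/
def IsKInjective {M : Type u} [Category.{v} M] [Abelian M] (I : CochainComplex M ℤ) : Prop :=
  ∀ N : CochainComplex M ℤ, (∀ n : ℤ, N.ExactAt n) →
    ∀ n : ℤ, (CochainComplex.HomComplex N I).ExactAt n

/-!
A K-injective complex `I` is right orthogonal to the acyclic complexes in `K(M)`, hence local
with respect to the morphisms whose cone is acyclic, i.e. the quasi-isomorphisms: precomposition
with the quasi-isomorphism `φ` is a bijection `(M' ⟶ I) ≃ (I ⟶ I)`, and a preimage of `𝟙 I`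
is the retraction.
-/

lemma CategoryTheory.MorphismProperty.isLocal.isSplitMono {C : Type*} [Category C]
    {W : MorphismProperty C} {X Y : C} (hX : W.isLocal X) (f : X ⟶ Y) (hf : W f) :
    IsSplitMono f :=
  let ⟨g, hg⟩ := (hX f hf).surjective (𝟙 X)
  ⟨⟨g, hg⟩⟩

open CochainComplex.HomComplex in
/-- Spaltenstein's K-injectivity implies `CochainComplex.IsKInjective`: by acyclicity of
`Hom•(N, I)` in degree `0`, the `0`-cocycle of a chain map `N ⟶ I` is the coboundary of a
homotopy to zero. -/
lemma IsKInjective.isKInjective {M : Type u} [Category.{v} M] [Abelian M]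
    {I : CochainComplex M ℤ} (hI : IsKInjective I) : CochainComplex.IsKInjective I where
  nonempty_homotopy_zero {N} f hN := by
    have hexact := hI N hN 0
    rw [HomologicalComplex.exactAt_iff' _ (-1) 0 1 (by simp) (by simp),
      ShortComplex.ab_exact_iff] at hexact
    obtain ⟨β, hβ⟩ := hexact (Cochain.ofHom f) (δ_ofHom f)
    replace hβ : δ (-1) 0 β = Cochain.ofHom f := hβ
    exact ⟨(Cochain.equivHomotopy f 0).symm ⟨β, by simp [hβ]⟩⟩

theorem stmt_10 {M : Type u} [Category.{v} M] [Abelian M]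
    (I M' : CochainComplex M ℤ) (hI : IsKInjective I)
    (φ : (HomotopyCategory.quotient M (ComplexShape.up ℤ)).obj I ⟶
        (HomotopyCategory.quotient M (ComplexShape.up ℤ)).obj M')
    (hφ : ∀ n : ℤ,
      IsIso ((HomotopyCategory.homologyFunctor M (ComplexShape.up ℤ) n).map φ)) :
    ∃ ψ : (HomotopyCategory.quotient M (ComplexShape.up ℤ)).obj M' ⟶
        (HomotopyCategory.quotient M (ComplexShape.up ℤ)).obj I,
      φ ≫ ψ = 𝟙 _ := by
  have := hI.isKInjective
  have hlocal : (HomotopyCategory.subcategoryAcyclic M).trW.isLocal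
      ((HomotopyCategory.quotient M (ComplexShape.up ℤ)).obj I) := by
    rw [ObjectProperty.isLocal_trW]
    exact CochainComplex.IsKInjective.rightOrthogonal I
  have hW : (HomotopyCategory.subcategoryAcyclic M).trW φ := by
    rw [← HomotopyCategory.quasiIso_eq_trW_subcategoryAcyclic]
    exact hφ
  have := hlocal.isSplitMono φ hW
  exact ⟨retraction φ, IsSplitMono.id φ⟩
end

section
/- Let M be an abelian category, I a K-injective complex, and M' any complex. Then the localization functor Q : K(M) → D(M) induces a bijection Hom_{K(M)}(M', I) → Hom_{D(M)}(M', I). Consequently, the restriction of Q to the full subcategory of K(M) on the K-injective complexes is fully faithful. -/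
/-!
Acyclicity of `Hom•(N, I)` in degree `0` says that every chain map from an acyclic complex to `I`
is null-homotopic, i.e. `I` is right orthogonal in `K(M)` to the acyclic complexes. Maps into such
an object are unchanged by localizing at the quasi-isomorphisms: a quasi-isomorphism `s : I ⟶ Z`
has acyclic cone, hence a retraction, so left fractions into `I` come from genuine morphisms.
-/

open CategoryTheory Limits

namespace CochainComplex

open HomComplex

variable {M : Type u} [Category.{v} M] [Abelian M]

/-- A `0`-cocycle of `Hom•(K, L)` is a chain map `K ⟶ L`, and a `(-1)`-cochain bounding it is
a null-homotopy. -/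
lemma isKInjective_of_exactAt_homComplex_zero {L : CochainComplex M ℤ}
    (hL : ∀ K : CochainComplex M ℤ, K.Acyclic → (HomComplex K L).ExactAt 0) :
    L.IsKInjective where
  nonempty_homotopy_zero {K} f hK := by
    have hexact := hL K hK
    rw [HomologicalComplex.exactAt_iff' _ (-1) 0 1 (by simp) (by simp),
      ShortComplex.ab_exact_iff] at hexact
    obtain ⟨α, hα⟩ := hexact (Cochain.ofHom f) (δ_ofHom f)
    exact ⟨(Cochain.equivHomotopy f 0).symm ⟨α, by rw [← hα]; simp; rfl⟩⟩

end CochainComplex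

theorem stmt_11 {M : Type u} [Category.{v} M] [Abelian M] [HasDerivedCategory.{w} M]
    (I : CochainComplex M ℤ) (hI : IsKInjective I) (M' : CochainComplex M ℤ) :
    Function.Bijective
      (fun f : (HomotopyCategory.quotient M (ComplexShape.up ℤ)).obj M' ⟶
          (HomotopyCategory.quotient M (ComplexShape.up ℤ)).obj I =>
        DerivedCategory.Qh.map f) := by
  have : I.IsKInjective :=
    CochainComplex.isKInjective_of_exactAt_homComplex_zero fun K hK => hI K hK 0
  exact CochainComplex.IsKInjective.Qh_map_bijective _ I
end

section
/- Let A be a ring and M a bounded above cochain complex of left A-modules. Then there exists a quasi-isomorphism P → M where P is a bounded above complex of free A-modules. If moreover A is left noetherian and every cohomology module H^i(M) is finitely generated, then P can be chosen so that each P^i is a finitely generated free A-module. -/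
/-!
Work first with a chain complex `N` indexed by `ℕ` and build the resolution `P` from degree `0`
upwards. Once `P_{k-1} → P_{k-2}` and its map to `N` are built, take `P_k = F₁ ⊕ F₂` with `F₁`
and `F₂` free, where `F₁` maps onto the cycles of `P_{k-1}` whose image in `N_{k-1}` is a
boundary (this kills the kernel of `H_{k-1}(P) → H_{k-1}(N)`), and `F₂` maps onto `H_k(N)`
through lifts to cycles (this makes `H_k(P) → H_k(N)` surjective). Over a left noetherian ring
both can be chosen finitely generated when `P_{k-1}` and `H_k(N)` are.

A cochain complex `M` vanishing above `n` is quasi-isomorphic to its canonical truncation, which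
is the extension to `ℤ` of a chain complex indexed by `ℕ` (degree `k` going to `n - k`).
-/

open CategoryTheory Limits

universe u v

variable {R : Type u} [Ring R]

namespace ModuleCat

theorem exists_epi_comp_eq_comp {X Y Z : ModuleCat.{max u v} R} (g : X ⟶ Z) (h : Y ⟶ Z)
    (hg : ∀ x, ∃ y, h y = g x) :
    ∃ (X' : ModuleCat.{max u v} R) (π : X' ⟶ X) (_ : Epi π) (y : X' ⟶ Y), π ≫ g = y ≫ h := by
  choose s hs using hg
  refine ⟨of R (X →₀ R), ofHom (Finsupp.linearCombination R id),
    (epi_iff_surjective _).2 fun x => ⟨Finsupp.single x 1, by simp⟩,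
    ofHom (Finsupp.linearCombination R s), ?_⟩
  ext x
  simp [hs]

end ModuleCat

namespace HomologicalComplex

variable {ι : Type*} {c : ComplexShape ι} {K L : HomologicalComplex (ModuleCat.{max u v} R) c}

theorem quasiIsoAt_of_moduleCat (φ : K ⟶ L) {i j k : ι} (hi : c.prev j = i) (hk : c.next j = k)
    (hinj : ∀ x : K.X j, K.d j k x = 0 → (∃ y, L.d i j y = φ.f j x) → ∃ x', K.d i j x' = x)
    (hsurj : ∀ y : L.X j, L.d j k y = 0 →
      ∃ (x : K.X j) (y' : L.X i), K.d j k x = 0 ∧ φ.f j x = y + L.d i j y') :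
    QuasiIsoAt φ j := by
  rw [quasiIsoAt_iff_isIso_homologyMap]
  have hmono : Mono (homologyMap φ j) := by
    rw [mono_homologyMap_iff_up_to_refinements φ i j k hi hk]
    intro A x₂ hx₂ y₁ hy₁
    refine ModuleCat.exists_epi_comp_eq_comp _ _ fun a => hinj (x₂ a) ?_ ⟨y₁ a, ?_⟩
    · exact congr($hx₂ a)
    · exact congr($hy₁ a).symm
  have hepi : Epi (homologyMap φ j) := by
    rw [epi_homologyMap_iff_up_to_refinements φ i j k hi hk]
    intro A y₂ hy₂
    let Z := LinearMap.ker (K.d j k).hom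
    obtain ⟨A', π, hπ, y, hy⟩ := ModuleCat.exists_epi_comp_eq_comp y₂
      (ModuleCat.ofHom ((φ.f j).hom ∘ₗ Z.subtype ∘ₗ LinearMap.fst R Z (L.X i) +
        (L.d i j).hom ∘ₗ LinearMap.snd R Z (L.X i))) fun a => by
      obtain ⟨x, y', hx, hxy⟩ := hsurj (y₂ a) congr($hy₂ a)
      exact ⟨(⟨x, hx⟩, -y'), by simp [hxy]⟩
    refine ⟨A', π, hπ, y ≫ ModuleCat.ofHom (Z.subtype ∘ₗ LinearMap.fst R Z (L.X i)), ?_,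
      y ≫ ModuleCat.ofHom (LinearMap.snd R Z (L.X i)), ?_⟩
    · ext a
      exact (y a).1.2
    · rw [hy]
      ext a
      simp
  exact isIso_of_mono_of_epi _

end HomologicalComplex

theorem Module.exists_free_surjective (M : Type (max u v)) [AddCommGroup M] [Module R M] :
    ∃ (F : ModuleCat.{max u v} R) (p : F →ₗ[R] M), Function.Surjective p ∧ Module.Free R F ∧
      (Module.Finite R M → Module.Finite R F) := by
  obtain ⟨s, hs, hsfin⟩ : ∃ s : Set M, Submodule.span R s = ⊤ ∧ (Module.Finite R M → s.Finite) := by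
    by_cases hM : Module.Finite R M
    · obtain ⟨s, hs⟩ := hM.fg_top
      exact ⟨s, hs, fun _ => s.finite_toSet⟩
    · exact ⟨Set.univ, Submodule.span_univ, fun h => absurd h hM⟩
  refine ⟨ModuleCat.of R (s →₀ R), Finsupp.linearCombination R Subtype.val, ?_,
    inferInstanceAs (Module.Free R (s →₀ R)), fun hM => ?_⟩
  · rw [← LinearMap.range_eq_top, Finsupp.range_linearCombination, Subtype.range_coe, hs]
  · have := (hsfin hM).to_subtype
    exact inferInstanceAs (Module.Finite R (s →₀ R))

namespace CategoryTheory.ShortComplex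

variable (S : ShortComplex (ModuleCat.{max u v} R)) {Q' Q'' : ModuleCat.{max u v} R}
  (δ' : Q' ⟶ Q'') (f' : Q' ⟶ S.X₃)

/-- One step of the construction of `ChainComplex.resolution`: `δ' : Q' ⟶ Q''` and `f' : Q' ⟶ S.X₃`
are the top of the part already built, and `Q` makes the comparison map injective on homology at
`Q'` (`exists_δ_eq`) and surjective on homology at `Q` (`exists_f_eq`). -/
structure ResolutionStep where
  Q : ModuleCat.{max u v} R
  δ : Q ⟶ Q'
  f : Q ⟶ S.X₂
  free : Module.Free R Q
  finite : IsNoetherianRing R → Module.Finite R Q' → Module.Finite R S.homology →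
    Module.Finite R Q
  comp_eq_zero : δ ≫ δ' = 0
  comm : δ ≫ f' = f ≫ S.g
  exists_δ_eq : ∀ x : Q', δ' x = 0 → (∃ w, S.g w = f' x) → ∃ y, δ y = x
  exists_f_eq : ∀ z : S.X₂, S.g z = 0 → ∃ y w, δ y = 0 ∧ f y = z + S.f w

theorem nonempty_resolutionStep : Nonempty (S.ResolutionStep δ' f') := by
  let K : Submodule R Q' := LinearMap.ker δ'.hom ⊓ (LinearMap.range S.g.hom).comap f'.hom
  obtain ⟨F₁, p₁, hp₁, hF₁, hF₁fin⟩ := Module.exists_free_surjective (R := R) K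
  obtain ⟨F₂, p₂, hp₂, hF₂, hF₂fin⟩ :=
    Module.exists_free_surjective (R := R) S.moduleCatLeftHomologyData.H
  obtain ⟨m, hm⟩ := Module.projective_lifting_property (h := .of_free) S.g.hom.rangeRestrict
    ((f'.hom ∘ₗ K.subtype).codRestrict _ (fun x => x.2.2) ∘ₗ p₁)
    S.g.hom.surjective_rangeRestrict
  obtain ⟨l, hl⟩ := Module.projective_lifting_property (h := .of_free)
    (LinearMap.range S.moduleCatToCycles).mkQ p₂ (Submodule.mkQ_surjective _)
  refine ⟨⟨ModuleCat.of R (F₁ × F₂),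
    ModuleCat.ofHom (K.subtype ∘ₗ p₁ ∘ₗ LinearMap.fst R F₁ F₂),
    ModuleCat.ofHom (m ∘ₗ LinearMap.fst R F₁ F₂ +
      (LinearMap.ker S.g.hom).subtype ∘ₗ l ∘ₗ LinearMap.snd R F₁ F₂),
    inferInstance, fun _ hQ' hH => ?_, ?_, ?_, ?_, ?_⟩⟩
  · have := isNoetherian_of_isNoetherianRing_of_finite R Q'
    have := hF₁fin inferInstance
    have := hF₂fin (.equiv S.moduleCatHomologyIso.toLinearEquiv)
    exact inferInstanceAs (Module.Finite R (F₁ × F₂))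
  · refine ModuleCat.hom_ext (LinearMap.ext fun y => ?_)
    exact (p₁ y.1).2.1
  · refine ModuleCat.hom_ext (LinearMap.ext fun y => ?_)
    have hmy : S.g (m y.1) = f' (p₁ y.1) := congr(Subtype.val ($hm y.1))
    simp [hmy]
  · intro x hx ⟨w, hw⟩
    obtain ⟨a, ha⟩ := hp₁ ⟨x, hx, w, hw⟩
    exact ⟨(a, 0), by simp [ha]⟩
  · intro z hz
    obtain ⟨b, hb⟩ := hp₂ (Submodule.mkQ _ ⟨z, hz⟩)
    obtain ⟨w, hw⟩ := (Submodule.Quotient.eq _).1 (congr($hl b).trans hb)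
    refine ⟨(0, b), w, by simp, ?_⟩
    have hw' : S.f w = l b - z := congr(Subtype.val $hw)
    simp [hw']

noncomputable def ResolutionStep.some : S.ResolutionStep δ' f' :=
  Classical.choice (S.nonempty_resolutionStep δ' f')

end CategoryTheory.ShortComplex

namespace ChainComplex

open ShortComplex

variable (N : ChainComplex (ModuleCat.{max u v} R) ℕ)

structure ResolutionTop (k : ℕ) where
  Q : ModuleCat.{max u v} R
  Q' : ModuleCat.{max u v} R
  δ : Q ⟶ Q'
  f : Q ⟶ N.X k

/-- The top `P_{k-1} ⟶ P_{k-2}` of the resolution built so far, with its map to `N`; for `k = 0`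
it is the zero module over `N.X 0` (note `0 - 1 = 0` in `ℕ`). -/
noncomputable def resolutionTop : (k : ℕ) → ResolutionTop N (k - 1)
  | 0 => ⟨ModuleCat.of R PUnit, ModuleCat.of R PUnit, 0, 0⟩
  | k + 1 =>
    let s := ResolutionStep.some (N.sc' (k + 1) k (k - 1)) (resolutionTop k).δ (resolutionTop k).f
    ⟨s.Q, (resolutionTop k).Q, s.δ, s.f⟩

noncomputable def resolutionStep (k : ℕ) :
    (N.sc' (k + 1) k (k - 1)).ResolutionStep (resolutionTop N k).δ (resolutionTop N k).f :=
  .some _ _ _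

noncomputable def resolution : ChainComplex (ModuleCat.{max u v} R) ℕ :=
  of (fun k => (resolutionStep N k).Q) (fun k => (resolutionStep N (k + 1)).δ)
    (fun k => (resolutionStep N (k + 2)).comp_eq_zero)

theorem resolution_d_succ (k : ℕ) :
    (resolution N).d (k + 1) k = (resolutionStep N (k + 1)).δ :=
  of_d (fun k => (resolutionStep N k).Q) (fun k => (resolutionStep N (k + 1)).δ) k

noncomputable def resolutionπ : resolution N ⟶ N where
  f k := (resolutionStep N k).f
  comm' := by
    rintro _ j rfl
    rw [resolution_d_succ]
    exact (resolutionStep N (j + 1)).comm.symm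

theorem next_nat (j : ℕ) : (ComplexShape.down ℕ).next j = j - 1 := by
  cases j with
  | zero => exact next_nat_zero
  | succ j => exact next_nat_succ j

theorem resolution_d_apply_eq_zero_iff (k : ℕ) (x : (resolution N).X k) :
    (resolution N).d k (k - 1) x = 0 ↔ (resolutionStep N k).δ x = 0 := by
  cases k with
  | zero =>
    simp only [(resolution N).shape 0 (0 - 1) (by simp)]
    exact iff_of_true rfl (Subsingleton.elim (α := PUnit) _ _)
  | succ k =>
    show (resolution N).d (k + 1) k x = 0 ↔ _
    rw [resolution_d_succ]
    exact Iff.rfl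

theorem quasiIso_resolutionπ : QuasiIso (resolutionπ N) where
  quasiIsoAt j := by
    refine HomologicalComplex.quasiIsoAt_of_moduleCat _ (prev ℕ j) (next_nat j) ?_ ?_
    · intro x hx hy
      rw [resolution_d_succ]
      exact (resolutionStep N (j + 1)).exists_δ_eq x
        ((resolution_d_apply_eq_zero_iff N j x).1 hx) hy
    · intro z hz
      obtain ⟨y, w, hy, hyw⟩ := (resolutionStep N j).exists_f_eq z hz
      exact ⟨y, w, (resolution_d_apply_eq_zero_iff N j y).2 hy, hyw⟩

theorem free_resolution_X (k : ℕ) : Module.Free R ((resolution N).X k) :=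
  (resolutionStep N k).free

theorem finite_resolutionTop_Q [IsNoetherianRing R] [∀ k, Module.Finite R (N.homology k)] :
    ∀ k, Module.Finite R (resolutionTop N k).Q
  | 0 => inferInstanceAs (Module.Finite R PUnit.{max u v + 1})
  | k + 1 => (resolutionStep N k).finite inferInstance (finite_resolutionTop_Q k)
    (.equiv (N.homologyIsoSc' (k + 1) k (k - 1) (prev ℕ k) (next_nat k)).toLinearEquiv)

theorem finite_resolution_X [IsNoetherianRing R] [∀ k, Module.Finite R (N.homology k)] (k : ℕ) :
    Module.Finite R ((resolution N).X k) :=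
  finite_resolutionTop_Q N (k + 1)

end ChainComplex

namespace HomologicalComplex

variable {ι ι' : Type*} {c : ComplexShape ι} {c' : ComplexShape ι'}

theorem extend_X_linearEquiv_or_subsingleton (K : HomologicalComplex (ModuleCat.{max u v} R) c)
    (e : c.Embedding c') (i' : ι') :
    (∃ i, Nonempty ((K.extend e).X i' ≃ₗ[R] K.X i)) ∨ Subsingleton ((K.extend e).X i') := by
  by_cases h : ∃ i, e.f i = i'
  · obtain ⟨i, hi⟩ := h
    exact .inl ⟨i, ⟨(K.extendXIso e hi).toLinearEquiv⟩⟩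
  · simp only [not_exists] at h
    exact .inr (ModuleCat.subsingleton_of_isZero (K.isZero_extend_X e i' h))

end HomologicalComplex

namespace CochainComplex

open HomologicalComplex

theorem exists_free_quasiIso (M : CochainComplex (ModuleCat.{max u v} R) ℤ) (n : ℤ)
    [M.IsStrictlyLE n] :
    ∃ (P : CochainComplex (ModuleCat.{max u v} R) ℤ) (φ : P ⟶ M), P.IsStrictlyLE n ∧ QuasiIso φ ∧
      (∀ i, Module.Free R (P.X i)) ∧
      (IsNoetherianRing R → (∀ i, Module.Finite R (M.homology i)) →
        ∀ i, Module.Finite R (P.X i)) := by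
  let e := ComplexShape.embeddingUpIntLE n
  let N := M.truncLE' e
  refine ⟨(ChainComplex.resolution N).extend e,
    extendMap (ChainComplex.resolutionπ N) e ≫ (M.truncLEIso e).inv ≫
      HomologicalComplex.ιTruncLE M e,
    inferInstanceAs (IsStrictlySupported _ e), ?_, fun i => ?_, fun hR hM i => ?_⟩
  · have := ChainComplex.quasiIso_resolutionπ N
    infer_instance
  · rcases extend_X_linearEquiv_or_subsingleton (ChainComplex.resolution N) e i with ⟨k, ⟨g⟩⟩ | _
    · have := ChainComplex.free_resolution_X N k
      exact .of_equiv g.symm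
    · exact .of_subsingleton _ _
  · have hN (k : ℕ) : Module.Finite R (N.homology k) :=
      .equiv ((N.extendHomologyIso e rfl).symm ≪≫
        (homologyFunctor _ _ (e.f k)).mapIso (M.truncLEIso e).symm ≪≫
        isoOfQuasiIsoAt (HomologicalComplex.ιTruncLE M e) (e.f k)).toLinearEquiv.symm
    rcases extend_X_linearEquiv_or_subsingleton (ChainComplex.resolution N) e i with ⟨k, ⟨g⟩⟩ | _
    · have := ChainComplex.finite_resolution_X N k
      exact .equiv g.symm
    · infer_instance

end CochainComplex

theorem stmt_14 (A : Type) [Ring A] (M : CochainComplex (ModuleCat A) ℤ)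
    (hbdd : ∃ n₁ : ℤ, ∀ n > n₁, IsZero (M.X n)) :
    (∃ (P : CochainComplex (ModuleCat A) ℤ) (f : P ⟶ M),
      (∃ n₁ : ℤ, ∀ n > n₁, IsZero (P.X n)) ∧
      (∀ n : ℤ, Module.Free A (P.X n)) ∧
      QuasiIso f) ∧
    (IsNoetherianRing A → (∀ i : ℤ, Module.Finite A (M.homology i)) →
      ∃ (P : CochainComplex (ModuleCat A) ℤ) (f : P ⟶ M),
        (∃ n₁ : ℤ, ∀ n > n₁, IsZero (P.X n)) ∧
        (∀ n : ℤ, Module.Free A (P.X n) ∧ Module.Finite A (P.X n)) ∧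
        QuasiIso f) := by
  obtain ⟨n, hn⟩ := hbdd
  have : M.IsStrictlyLE n := (M.isStrictlyLE_iff n).2 hn
  obtain ⟨P, φ, hP, hφ, hfree, hfinite⟩ := M.exists_free_quasiIso n
  have hPbdd : ∃ n₁ : ℤ, ∀ i > n₁, IsZero (P.X i) := ⟨n, (P.isStrictlyLE_iff n).1 hP⟩
  exact ⟨⟨P, φ, hPbdd, hfree, hφ⟩,
    fun hA hM => ⟨P, φ, hPbdd, fun i => ⟨hfree i, hfinite hA hM i⟩, hφ⟩⟩
end
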